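/- arXiv:2105.12806 — 3 statements merged into one kernel-verified Lean document; each statement's English description precedes it below -/
import Mathlib

section
/- If a real random variable X satisfies P[|X| ≥ t] ≤ 2exp(−t²/C) for all t ≥ 0, then E[exp(X²/(3C))] ≤ 2. -/
open MeasureTheory ProbabilityTheory

/-- a `C`-subgaussian tail bound implies `E[exp(X²/(3C))] ≤ 2`. -/
theorem subgaussian_exp_moment
    {Ω : Type*} [MeasureSpace Ω] [IsProbabilityMeasure (ℙ : Measure Ω)]
    (X : Ω → ℝ) (hX : Measurable X) (C : ℝ) (hC : 0 < C)
    (htail : ∀ t : ℝ, 0 ≤ t →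
      (ℙ : Measure Ω) {ω | t ≤ |X ω|} ≤ ENNReal.ofReal (2 * Real.exp (-t ^ 2 / C))) :
    ∫ ω, Real.exp (X ω ^ 2 / (3 * C)) ∂(ℙ : Measure Ω) ≤ 2 := by
  set f : Ω → ℝ := fun ω => Real.exp (X ω ^ 2 / (3 * C)) with hf
  have f_nn : 0 ≤ᵐ[(ℙ : Measure Ω)] f := .of_forall fun ω => (Real.exp_pos _).le
  have f_mble : AEMeasurable f (ℙ : Measure Ω) :=
    (((hX.pow_const 2).div_const _).exp).aemeasurable
  have key := MeasureTheory.lintegral_eq_lintegral_meas_le (ℙ : Measure Ω) f_nn f_mble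
  have hle : ∫⁻ t in Set.Ioi (0:ℝ), (ℙ : Measure Ω) {ω | t ≤ f ω} ≤ 2 := by
    have split : Set.Ioi (0:ℝ) = Set.Ioc 0 1 ∪ Set.Ioi 1 :=
      (Set.Ioc_union_Ioi_eq_Ioi zero_le_one).symm
    rw [split, lintegral_union measurableSet_Ioi Set.Ioc_disjoint_Ioi_same]
    have h1 : ∫⁻ t in Set.Ioc (0:ℝ) 1, (ℙ : Measure Ω) {ω | t ≤ f ω} ≤ 1 := by
      calc ∫⁻ t in Set.Ioc (0:ℝ) 1, (ℙ : Measure Ω) {ω | t ≤ f ω}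
          ≤ ∫⁻ _ in Set.Ioc (0:ℝ) 1, 1 := lintegral_mono fun t => prob_le_one
        _ = 1 := by simp [Real.volume_Ioc]
    have h2 : ∫⁻ t in Set.Ioi (1:ℝ), (ℙ : Measure Ω) {ω | t ≤ f ω} ≤ 1 := by
      have hb : ∀ t ∈ Set.Ioi (1:ℝ),
          (ℙ : Measure Ω) {ω | t ≤ f ω} ≤ ENNReal.ofReal (2 * t ^ (-3:ℝ)) := by
        intro t ht
        have ht1 : (1:ℝ) < t := ht
        have ht0 : (0:ℝ) < t := lt_trans zero_lt_one ht1
        set s := Real.sqrt (3 * C * Real.log t) with hsdef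
        have hlog : 0 ≤ Real.log t := Real.log_nonneg ht1.le
        have hs2 : s ^ 2 = 3 * C * Real.log t := Real.sq_sqrt (by positivity)
        have hsub : {ω | t ≤ f ω} ⊆ {ω | s ≤ |X ω|} := by
          intro ω hω
          have hlt : Real.log t ≤ X ω ^ 2 / (3 * C) := by
            have := Real.log_le_log ht0 hω
            rwa [Real.log_exp] at this
          have h3 : 3 * C * Real.log t ≤ X ω ^ 2 := by
            rw [le_div_iff₀ (by positivity)] at hlt
            nlinarith
          calc s ≤ Real.sqrt (X ω ^ 2) := Real.sqrt_le_sqrt h3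
            _ = |X ω| := Real.sqrt_sq_eq_abs _
        refine le_trans (measure_mono hsub)
          (le_trans (htail s (Real.sqrt_nonneg _)) (le_of_eq ?_))
        have hexp : Real.exp (-s ^ 2 / C) = t ^ (-3:ℝ) := by
          rw [hs2, Real.rpow_def_of_pos ht0]
          congr 1
          field_simp
        rw [hexp]
      have hm : Measurable fun t : ℝ => t ^ (-3:ℝ) := by fun_prop
      calc ∫⁻ t in Set.Ioi (1:ℝ), (ℙ : Measure Ω) {ω | t ≤ f ω}
          ≤ ∫⁻ t in Set.Ioi (1:ℝ), ENNReal.ofReal (2 * t ^ (-3:ℝ)) :=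
            setLIntegral_mono ((hm.const_mul 2).ennreal_ofReal) hb
        _ = ENNReal.ofReal (∫ t in Set.Ioi (1:ℝ), 2 * t ^ (-3:ℝ)) := by
            rw [MeasureTheory.ofReal_integral_eq_lintegral_ofReal]
            · exact (integrableOn_Ioi_rpow_of_lt (by norm_num) zero_lt_one).const_mul 2
            · refine (ae_restrict_iff' measurableSet_Ioi).2 (.of_forall fun t ht => ?_)
              have : (0:ℝ) < t := lt_trans zero_lt_one ht
              positivity
        _ = 1 := by
            rw [MeasureTheory.integral_const_mul, integral_Ioi_rpow_of_lt (by norm_num) zero_lt_one]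
            norm_num
    calc _ ≤ (1 : ENNReal) + 1 := add_le_add h1 h2
      _ = 2 := by norm_num
  rw [MeasureTheory.integral_eq_lintegral_of_nonneg_ae f_nn f_mble.aestronglyMeasurable]
  refine ENNReal.toReal_le_of_le_ofReal (by norm_num) ?_
  rw [key]
  simpa using hle
end

section
/- Let Z, G, F ∈ ℝⁿ with ‖Z‖² ≥ σ² − ε/6 and ⟨Z, G⟩ ≥ −ε/6 (Euclidean norm and inner product). If ‖G + Z − F‖² ≤ σ² − ε, then ⟨F, Z⟩ ≥ ε/4. -/
open EuclideanSpace

open scoped RealInnerProductSpace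

theorem norm_sq_add_two_inner_le_norm_add_sub_sq_add_two_inner
    {E : Type*} [NormedAddCommGroup E] [InnerProductSpace ℝ E] (G Z F : E) :
    ‖Z‖ ^ 2 + 2 * ⟪G, Z⟫ ≤ ‖G + Z - F‖ ^ 2 + 2 * ⟪F, Z⟫ := by
  have hexpand : ‖G + Z - F‖ ^ 2 = ‖G - F‖ ^ 2 + 2 * ⟪G - F, Z⟫ + ‖Z‖ ^ 2 := by
    rw [← norm_add_sq_real, sub_add_eq_add_sub, add_sub_right_comm]
  rw [hexpand, inner_sub_left]
  linarith [sq_nonneg ‖G - F‖]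

theorem fitting_below_noise_forces_correlation_general
    (n : ℕ) (σ ε : ℝ)
    (Z G F : EuclideanSpace ℝ (Fin n))
    (hZ : σ ^ 2 - ε / 6 ≤ ‖Z‖ ^ 2)
    (hZG : -(ε / 6) ≤ inner ℝ Z G)
    (hfit : ‖G + Z - F‖ ^ 2 ≤ σ ^ 2 - ε) :
    ε / 4 ≤ (inner ℝ F Z : ℝ) := by
  rw [real_inner_comm] at hZG
  linarith [norm_sq_add_two_inner_le_norm_add_sub_sq_add_two_inner G Z F]

/-- If `‖Z‖² ≥ σ² - ε/6`, `⟨Z,G⟩ ≥ -ε/6` and `‖G+Z-F‖² ≤ σ² - ε`,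
then `⟨F,Z⟩ ≥ ε/4`. -/
theorem fitting_below_noise_forces_correlation
    (n : ℕ) (σ ε : ℝ) (hσ : 0 ≤ σ) (hε : ε ∈ Set.Ioo (0 : ℝ) 1)
    (Z G F : EuclideanSpace ℝ (Fin n))
    (hZ : σ ^ 2 - ε / 6 ≤ ‖Z‖ ^ 2)
    (hZG : -(ε / 6) ≤ inner ℝ Z G)
    (hfit : ‖G + Z - F‖ ^ 2 ≤ σ ^ 2 - ε) :
    ε / 4 ≤ (inner ℝ F Z : ℝ) :=
  fitting_below_noise_forces_correlation_general n σ ε Z G F hZ hZG hfit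
end

section
/- Let μ be a c-isoperimetric probability measure on ℝᵈ, let (xᵢ, zᵢ)ᵢ∈[n] be i.i.d. with xᵢ ∼ μ, E[zᵢ | xᵢ] = 0 and |zᵢ| ≤ 2 almost surely. Then for any fixed L-Lipschitz f : ℝᵈ → [−1,1] and ε > 0, P[(1/n)∑ᵢ (f(xᵢ) − E_μ[f]) zᵢ ≥ ε/8] ≤ 2exp(−ε²nd/(10⁴ c L²)). -/
/-!
Each summand `Yᵢ = (f(xᵢ) - E_μ f) zᵢ` is centred because `E[zᵢ | xᵢ] = 0`, and since `|zᵢ| ≤ 2`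
isoperimetry gives it the Gaussian tail `P[|Yᵢ| ≥ t] ≤ 2 exp(-d t² / (8 c L²))`. A centred variable
with a Gaussian tail of variance `w` has a sub-Gaussian moment generating function with parameter
`16 w`: the layer-cake formula bounds `E exp(s Y²)`, and `E exp(λ Y)` is reduced to it through
`eˣ ≤ x + exp(x²)` for small `λ` and through Young's inequality for large `λ`. Hoeffding's
inequality for the independent sum then gives the bound with `8192` in place of `10⁴`.
-/

open MeasureTheory ProbabilityTheory Real
open scoped NNReal

/-- `μ` on `ℝᵈ` satisfies `c`-isoperimetry. -/
def Isoperimetric (d : ℕ) (c : ℝ) (μ : Measure (EuclideanSpace ℝ (Fin d))) : Prop :=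
  ∀ (L : ℝ), 0 < L → ∀ (f : EuclideanSpace ℝ (Fin d) → ℝ),
    (∃ M, ∀ x, |f x| ≤ M) → LipschitzWith (Real.toNNReal L) f →
    ∀ t : ℝ, 0 ≤ t →
      μ {x | t ≤ |f x - ∫ y, f y ∂μ|} ≤
        ENNReal.ofReal (2 * Real.exp (-(d * t ^ 2) / (2 * c * L ^ 2)))

lemma exp_le_add_exp_sq (x : ℝ) : exp x ≤ x + exp (x ^ 2) := by
  have hsq : 1 + x ^ 2 ≤ exp (x ^ 2) := by linarith [add_one_le_exp (x ^ 2)]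
  rcases le_or_gt 1 x with h | h
  · linarith [exp_le_exp.mpr (show x ≤ x ^ 2 by nlinarith)]
  rcases le_or_gt x (-1) with h' | h'
  · linarith [exp_le_one_iff.mpr (show x ≤ 0 by linarith), show 0 ≤ x ^ 2 + x by nlinarith]
  · have := (abs_le.mp (abs_exp_sub_one_sub_id_le (abs_le.mpr ⟨h'.le, h.le⟩))).2
    linarith

lemma integral_mul_exp_mul (s T : ℝ) :
    ∫ t in (0 : ℝ)..T, s * exp (s * t) = exp (s * T) - 1 := by
  rw [intervalIntegral.integral_const_mul, intervalIntegral.mul_integral_comp_mul_left,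
    integral_exp, mul_zero, exp_zero]

lemma exp_mul_le_exp_sq_mul_exp_sq {w : ℝ} (hw : 0 < w) (l y : ℝ) :
    exp (l * y) ≤ exp (l ^ 2 * w) * exp (1 / (4 * w) * y ^ 2) := by
  rw [← exp_add, exp_le_exp, ← sub_nonneg]
  have : l ^ 2 * w + 1 / (4 * w) * y ^ 2 - l * y = (2 * l * w - y) ^ 2 / (4 * w) := by
    field_simp; ring
  rw [this]; positivity

/-- The tail bound of a centred Gaussian of variance `w`. -/
def HasSubgaussianTail {Ω : Type*} [MeasurableSpace Ω] (Y : Ω → ℝ) (w : ℝ) (μ : Measure Ω) :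
    Prop :=
  ∀ t, 0 ≤ t → μ {ω | t ≤ |Y ω|} ≤ ENNReal.ofReal (2 * exp (-t ^ 2 / (2 * w)))

namespace HasSubgaussianTail

variable {Ω : Type*} {mΩ : MeasurableSpace Ω} {μ : Measure Ω} {Y : Ω → ℝ} {w : ℝ}

lemma measure_le_sq_le (h : HasSubgaussianTail Y w μ) {t : ℝ} (ht : 0 ≤ t) :
    μ {ω | t ≤ Y ω ^ 2} ≤ ENNReal.ofReal (2 * exp (-t / (2 * w))) := by
  calc μ {ω | t ≤ Y ω ^ 2} ≤ μ {ω | √t ≤ |Y ω|} :=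
        measure_mono fun ω hω ↦ (sqrt_le_sqrt hω).trans_eq (sqrt_sq_eq_abs _)
    _ ≤ _ := by simpa only [sq_sqrt ht] using h √t (sqrt_nonneg t)

lemma comp_of_map_eq {E : Type*} [MeasurableSpace E] {ν : Measure E} {g : E → ℝ}
    (h : HasSubgaussianTail g w ν) (hg : Measurable g) {X : Ω → E} (hX : Measurable X)
    (hlaw : μ.map X = ν) : HasSubgaussianTail (fun ω ↦ g (X ω)) w μ := fun t ht ↦ by
  have := h t ht
  rwa [← hlaw, Measure.map_apply hX (measurableSet_le measurable_const hg.abs)] at this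

lemma mul_of_abs_le (h : HasSubgaussianTail Y w μ) {Z : Ω → ℝ} {B : ℝ} (hB : 0 < B)
    (hZ : ∀ᵐ ω ∂μ, |Z ω| ≤ B) : HasSubgaussianTail (fun ω ↦ Y ω * Z ω) (B ^ 2 * w) μ := by
  intro t ht
  calc μ {ω | t ≤ |Y ω * Z ω|} ≤ μ {ω | t / B ≤ |Y ω|} := by
        refine measure_mono_ae (hZ.mono fun ω hZω (hω : t ≤ |Y ω * Z ω|) ↦ ?_)
        rw [abs_mul] at hω
        exact (div_le_iff₀ hB).mpr (hω.trans (by gcongr))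
    _ ≤ _ := h _ (by positivity)
    _ = ENNReal.ofReal (2 * exp (-t ^ 2 / (2 * (B ^ 2 * w)))) := by ring_nf

lemma lintegral_exp_mul_sq_sub_one_le (h : HasSubgaussianTail Y w μ) (hY : Measurable Y)
    (hw : 0 < w) {s : ℝ} (hs : 0 ≤ s) (hsw : 2 * s * w < 1) :
    ∫⁻ ω, ENNReal.ofReal (exp (s * Y ω ^ 2) - 1) ∂μ ≤
      ENNReal.ofReal (4 * s * w / (1 - 2 * s * w)) := by
  have ha : s - 1 / (2 * w) < 0 := by
    rw [sub_neg, lt_div_iff₀ (by positivity)]; linarith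
  -- layer cake: `E[exp(s Y²) - 1] = ∫_{t > 0} s exp(s t) P[Y² ≥ t] dt`
  have hlayer := lintegral_comp_eq_lintegral_meas_le_mul μ (f := fun ω ↦ Y ω ^ 2)
    (g := fun t ↦ s * exp (s * t)) (ae_of_all _ fun ω ↦ sq_nonneg _)
    (hY.pow_const 2).aemeasurable (fun t _ ↦ (by fun_prop : Continuous _).intervalIntegrable _ _)
    (ae_of_all _ fun t ↦ by positivity)
  simp only [integral_mul_exp_mul] at hlayer
  have hexp_int : IntegrableOn (fun t ↦ 2 * s * exp ((s - 1 / (2 * w)) * t)) (Set.Ioi 0) :=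
    (integrableOn_exp_mul_Ioi ha 0).const_mul _
  rw [hlayer]
  calc ∫⁻ t in Set.Ioi 0, μ {ω | t ≤ Y ω ^ 2} * ENNReal.ofReal (s * exp (s * t))
      ≤ ∫⁻ t in Set.Ioi 0, ENNReal.ofReal (2 * s * exp ((s - 1 / (2 * w)) * t)) := by
        refine setLIntegral_mono' measurableSet_Ioi fun t ht ↦ ?_
        grw [h.measure_le_sq_le (le_of_lt ht), ← ENNReal.ofReal_mul (by positivity)]
        refine le_of_eq (congrArg _ ?_)
        rw [mul_mul_mul_comm, ← exp_add]
        ring_nf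
    _ = ENNReal.ofReal (∫ t in Set.Ioi 0, 2 * s * exp ((s - 1 / (2 * w)) * t)) :=
        (ofReal_integral_eq_lintegral_ofReal hexp_int (ae_of_all _ fun t ↦ by positivity)).symm
    _ = ENNReal.ofReal (4 * s * w / (1 - 2 * s * w)) := by
        rw [integral_const_mul, integral_exp_mul_Ioi ha, mul_zero, exp_zero]
        have hden : 1 - 2 * s * w ≠ 0 := by linarith
        rw [show s - 1 / (2 * w) = -(1 - 2 * s * w) / (2 * w) by field_simp; ring]
        congr 1
        field_simp
        ring

lemma integrable_exp_mul_sq (h : HasSubgaussianTail Y w μ) (hY : Measurable Y) (hw : 0 < w)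
    {s : ℝ} (hs : 0 ≤ s) (hsw : 2 * s * w < 1) [IsFiniteMeasure μ] :
    Integrable (fun ω ↦ exp (s * Y ω ^ 2)) μ := by
  have hnonneg : 0 ≤ᵐ[μ] fun ω ↦ exp (s * Y ω ^ 2) - 1 :=
    ae_of_all _ fun ω ↦ sub_nonneg.mpr (one_le_exp (by positivity))
  have hsub : Integrable (fun ω ↦ exp (s * Y ω ^ 2) - 1) μ :=
    ⟨(by fun_prop : Measurable _).aestronglyMeasurable,
      (hasFiniteIntegral_iff_ofReal hnonneg).mpr
        ((h.lintegral_exp_mul_sq_sub_one_le hY hw hs hsw).trans_lt ENNReal.ofReal_lt_top)⟩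
  exact (hsub.add (integrable_const 1)).congr (ae_of_all _ fun ω ↦ sub_add_cancel _ _)

lemma integral_exp_mul_sq_le (h : HasSubgaussianTail Y w μ) (hY : Measurable Y) (hw : 0 < w)
    {s : ℝ} (hs : 0 ≤ s) (hsw : 2 * s * w < 1) [IsProbabilityMeasure μ] :
    ∫ ω, exp (s * Y ω ^ 2) ∂μ ≤ 1 + 4 * s * w / (1 - 2 * s * w) := by
  have hnonneg : 0 ≤ᵐ[μ] fun ω ↦ exp (s * Y ω ^ 2) - 1 :=
    ae_of_all _ fun ω ↦ sub_nonneg.mpr (one_le_exp (by positivity))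
  have hsub : ∫ ω, exp (s * Y ω ^ 2) - 1 ∂μ ≤ 4 * s * w / (1 - 2 * s * w) := by
    rw [integral_eq_lintegral_of_nonneg_ae hnonneg (by fun_prop)]
    exact ENNReal.toReal_le_of_le_ofReal (div_nonneg (by positivity) (by linarith))
      (h.lintegral_exp_mul_sq_sub_one_le hY hw hs hsw)
  rw [integral_sub (h.integrable_exp_mul_sq hY hw hs hsw) (integrable_const 1)] at hsub
  simp only [integral_const, probReal_univ, smul_eq_mul, one_mul] at hsub
  linarith

lemma integrable_exp_mul (h : HasSubgaussianTail Y w μ) (hY : Measurable Y) (hw : 0 < w)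
    [IsFiniteMeasure μ] (l : ℝ) : Integrable (fun ω ↦ exp (l * Y ω)) μ := by
  refine ((h.integrable_exp_mul_sq hY hw (s := 1 / (4 * w)) (by positivity) ?_).const_mul
    (exp (l ^ 2 * w))).mono' (by fun_prop) (ae_of_all _ fun ω ↦ ?_)
  · field_simp; norm_num
  · rw [norm_of_nonneg (exp_nonneg _)]
    exact exp_mul_le_exp_sq_mul_exp_sq hw l (Y ω)

variable [IsProbabilityMeasure μ]

lemma mgf_le_of_sq_le (h : HasSubgaussianTail Y w μ) (hY : Measurable Y) (hw : 0 < w)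
    (hmean : μ[Y] = 0) {l : ℝ} (hl : 4 * l ^ 2 * w ≤ 1) : mgf Y μ l ≤ exp (8 * l ^ 2 * w) := by
  have hY_int : Integrable Y μ := by
    simpa using integrable_pow_of_integrable_exp_mul one_ne_zero
      (h.integrable_exp_mul hY hw 1) (h.integrable_exp_mul hY hw (-1)) 1
  have hsq_int := h.integrable_exp_mul_sq hY hw (sq_nonneg l) (by linarith)
  calc mgf Y μ l ≤ ∫ ω, l * Y ω + exp (l ^ 2 * Y ω ^ 2) ∂μ :=
        integral_mono (h.integrable_exp_mul hY hw l) ((hY_int.const_mul l).add hsq_int)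
          fun ω ↦ by simpa only [mul_pow] using exp_le_add_exp_sq (l * Y ω)
    _ = ∫ ω, exp (l ^ 2 * Y ω ^ 2) ∂μ := by
        rw [integral_add (hY_int.const_mul l) hsq_int, integral_const_mul, hmean, mul_zero,
          zero_add]
    _ ≤ 1 + 4 * l ^ 2 * w / (1 - 2 * l ^ 2 * w) :=
        h.integral_exp_mul_sq_le hY hw (sq_nonneg l) (by linarith)
    _ ≤ 1 + 8 * l ^ 2 * w := by
        rw [add_le_add_iff_left, div_le_iff₀ (by linarith)]
        nlinarith [mul_nonneg (mul_nonneg (sq_nonneg l) hw.le) (sub_nonneg.mpr hl)]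
    _ ≤ exp (8 * l ^ 2 * w) := by linarith [add_one_le_exp (8 * l ^ 2 * w)]

lemma mgf_le_of_le_sq (h : HasSubgaussianTail Y w μ) (hY : Measurable Y) (hw : 0 < w)
    {l : ℝ} (hl : 1 ≤ 4 * l ^ 2 * w) : mgf Y μ l ≤ exp (8 * l ^ 2 * w) := by
  have hsw : 2 * (1 / (4 * w)) * w = 1 / 2 := by field_simp; norm_num
  have hsq_int := h.integrable_exp_mul_sq hY hw (s := 1 / (4 * w)) (by positivity) (by linarith)
  have hsq_le : ∫ ω, exp (1 / (4 * w) * Y ω ^ 2) ∂μ ≤ 3 := by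
    have := h.integral_exp_mul_sq_le hY hw (s := 1 / (4 * w)) (by positivity) (by linarith)
    rw [hsw, show 4 * (1 / (4 * w)) * w = 1 by field_simp] at this
    linarith
  have hthree : 3 ≤ exp (7 * l ^ 2 * w) := by
    nlinarith [quadratic_le_exp_of_nonneg (show 0 ≤ 7 * l ^ 2 * w by positivity)]
  calc mgf Y μ l ≤ ∫ ω, exp (l ^ 2 * w) * exp (1 / (4 * w) * Y ω ^ 2) ∂μ :=
        integral_mono (h.integrable_exp_mul hY hw l) (hsq_int.const_mul _)
          fun ω ↦ exp_mul_le_exp_sq_mul_exp_sq hw l (Y ω)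
    _ ≤ exp (l ^ 2 * w) * 3 := by
        rw [integral_const_mul]
        gcongr
    _ ≤ exp (l ^ 2 * w) * exp (7 * l ^ 2 * w) := by gcongr
    _ = exp (8 * l ^ 2 * w) := by rw [← exp_add]; ring_nf

lemma hasSubgaussianMGF (h : HasSubgaussianTail Y w μ) (hY : Measurable Y) (hw : 0 < w)
    (hmean : μ[Y] = 0) : HasSubgaussianMGF Y (16 * w).toNNReal μ where
  integrable_exp_mul := h.integrable_exp_mul hY hw
  mgf_le l := by
    rw [coe_toNNReal _ (by positivity), show 16 * w * l ^ 2 / 2 = 8 * l ^ 2 * w by ring]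
    rcases le_total (4 * l ^ 2 * w) 1 with hl | hl
    · exact h.mgf_le_of_sq_le hY hw hmean hl
    · exact h.mgf_le_of_le_sq hY hw hl

end HasSubgaussianTail

lemma Isoperimetric.hasSubgaussianTail {d : ℕ} {c L : ℝ}
    {μ : Measure (EuclideanSpace ℝ (Fin d))} (hiso : Isoperimetric d c μ) (hL : 0 < L)
    {f : EuclideanSpace ℝ (Fin d) → ℝ} (hf : ∃ M, ∀ v, |f v| ≤ M) (hlip : LipschitzWith (Real.toNNReal L) f) :
    HasSubgaussianTail (fun v ↦ f v - ∫ y, f y ∂μ) (c * L ^ 2 / d) μ := fun t ht ↦ by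
  convert hiso L hL f hf hlip t ht using 4
  rw [mul_div_assoc', div_div_eq_mul_div]
  ring

lemma integral_mul_eq_zero_of_condExp_eq_zero {Ω E : Type*} {mΩ : MeasurableSpace Ω}
    [MeasurableSpace E] {μ : Measure Ω} [IsFiniteMeasure μ] {X : Ω → E} {Z : Ω → ℝ}
    (hX : Measurable X) (hZ : Integrable Z μ)
    (hcond : μ[Z | MeasurableSpace.comap X inferInstance] =ᵐ[μ] 0)
    {g : E → ℝ} (hg : Measurable g) {C : ℝ} (hgC : ∀ v, |g v| ≤ C) :
    ∫ ω, g (X ω) * Z ω ∂μ = 0 := by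
  have hgX : StronglyMeasurable[MeasurableSpace.comap X inferInstance] (fun ω ↦ g (X ω)) :=
    (hg.comp (comap_measurable X)).stronglyMeasurable
  have hgXZ : Integrable (fun ω ↦ g (X ω) * Z ω) μ :=
    hZ.bdd_mul (hg.comp hX).aestronglyMeasurable (ae_of_all _ fun ω ↦ hgC (X ω))
  rw [← integral_condExp hX.comap_le, integral_eq_zero_of_ae]
  filter_upwards [condExp_mul_of_stronglyMeasurable_left hgX hgXZ hZ, hcond] with ω h h0
  exact h.trans (by simp [h0])

lemma hasSubgaussianMGF_mul_of_condExp_eq_zero {Ω E : Type*} {mΩ : MeasurableSpace Ω}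
    [MeasurableSpace E] {μ : Measure Ω} [IsProbabilityMeasure μ] {ν : Measure E}
    {X : Ω → E} {Z : Ω → ℝ} {g : E → ℝ} {w B C : ℝ} (hX : Measurable X) (hZ : Measurable Z)
    (hg : Measurable g) (hlaw : μ.map X = ν) (hg_tail : HasSubgaussianTail g w ν) (hw : 0 < w)
    (hgC : ∀ v, |g v| ≤ C) (hB : 0 < B) (hZB : ∀ᵐ ω ∂μ, |Z ω| ≤ B)
    (hcond : μ[Z | MeasurableSpace.comap X inferInstance] =ᵐ[μ] 0) :
    HasSubgaussianMGF (fun ω ↦ g (X ω) * Z ω) (16 * (B ^ 2 * w)).toNNReal μ :=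
  ((hg_tail.comp_of_map_eq hg hX hlaw).mul_of_abs_le hB hZB).hasSubgaussianMGF
    ((hg.comp hX).mul hZ) (by positivity)
    (integral_mul_eq_zero_of_condExp_eq_zero hX
      ((integrable_const B).mono' hZ.aestronglyMeasurable hZB) hcond hg hgC)

lemma measure_mean_ge_le_of_iIndepFun {Ω : Type*} {mΩ : MeasurableSpace Ω} {μ : Measure Ω}
    [IsFiniteMeasure μ] {n : ℕ} {X : Fin n → Ω → ℝ} (h_indep : iIndepFun X μ) {c : ℝ≥0}
    (h_subG : ∀ i, HasSubgaussianMGF (X i) c μ) (hn : 0 < n) {ε : ℝ} (hε : 0 ≤ ε) :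
    μ {ω | ε ≤ (1 / n : ℝ) * ∑ i, X i ω} ≤ ENNReal.ofReal (exp (-(n * ε ^ 2) / (2 * c))) := by
  have hn' : (0 : ℝ) < n := Nat.cast_pos.mpr hn
  have hevent :
      {ω | ε ≤ (1 / n : ℝ) * ∑ i, X i ω} = {ω | n * ε ≤ ∑ i ∈ Finset.univ, X i ω} := by
    ext ω
    rw [Set.mem_ofPred_eq, Set.mem_ofPred_eq, one_div_mul_eq_div, le_div_iff₀ hn', mul_comm]
  rw [hevent, ← ofReal_measureReal]
  refine ENNReal.ofReal_le_ofReal ((HasSubgaussianMGF.measure_sum_ge_le_of_iIndepFun h_indep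
    (fun i _ ↦ h_subG i) (by positivity)).trans_eq ?_)
  simp only [Finset.sum_const, Finset.card_univ, Fintype.card_fin, nsmul_eq_mul, NNReal.coe_mul,
    NNReal.coe_natCast]
  congr 1
  field_simp

lemma abs_sub_integral_le {α : Type*} [MeasurableSpace α] {μ : Measure α}
    [IsProbabilityMeasure μ] {f : α → ℝ} {C : ℝ} (hf : ∀ v, |f v| ≤ C) (v : α) :
    |f v - ∫ y, f y ∂μ| ≤ 2 * C := by
  have hint : |∫ y, f y ∂μ| ≤ C := by
    simpa using norm_integral_le_of_norm_le_const (μ := μ)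
      (ae_of_all _ fun v ↦ (norm_eq_abs (f v)).trans_le (hf v))
  linarith [abs_sub (f v) (∫ y, f y ∂μ), hf v]

theorem single_function_correlation_bound_general
    {Ω : Type*} [MeasureSpace Ω] [IsProbabilityMeasure (ℙ : Measure Ω)]
    (d n : ℕ) (hd : 0 < d) (hn : 0 < n) (c L ε : ℝ) (hc : 0 < c) (hL : 0 < L)
    (hε : 0 < ε)
    (μ : Measure (EuclideanSpace ℝ (Fin d))) [IsProbabilityMeasure μ]
    (hiso : Isoperimetric d c μ)
    (x : Fin n → Ω → EuclideanSpace ℝ (Fin d)) (z : Fin n → Ω → ℝ)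
    (hxmeas : ∀ i, Measurable (x i)) (hzmeas : ∀ i, Measurable (z i))
    (hlaw : ∀ i, Measure.map (x i) ℙ = μ)
    (hindep : iIndepFun (fun i ω => (x i ω, z i ω)) ℙ)
    (hcond : ∀ i, (ℙ : Measure Ω)[z i | MeasurableSpace.comap (x i) inferInstance]
      =ᵐ[(ℙ : Measure Ω)] (0 : Ω → ℝ))
    (hbdd : ∀ i, ∀ᵐ ω ∂(ℙ : Measure Ω), |z i ω| ≤ 2)
    (f : EuclideanSpace ℝ (Fin d) → ℝ)
    (hf1 : ∀ v, f v ∈ Set.Icc (-1 : ℝ) 1)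
    (hlip : LipschitzWith (Real.toNNReal L) f) :
    (ℙ : Measure Ω) {ω | ε / 8 ≤ (1 / n : ℝ) * ∑ i, (f (x i ω) - ∫ y, f y ∂μ) * z i ω} ≤
      ENNReal.ofReal (2 * Real.exp (-(ε ^ 2 * n * d) / (10 ^ 4 * c * L ^ 2))) := by
  set g : EuclideanSpace ℝ (Fin d) → ℝ := fun v ↦ f v - ∫ y, f y ∂μ
  have hf_bdd : ∀ v, |f v| ≤ 1 := fun v ↦ abs_le.mpr (hf1 v)
  have hg_meas : Measurable g := hlip.continuous.measurable.sub measurable_const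
  have hw : 0 < c * L ^ 2 / d := by positivity
  have hY_subG (i : Fin n) := hasSubgaussianMGF_mul_of_condExp_eq_zero (hxmeas i) (hzmeas i)
    hg_meas (hlaw i) (hiso.hasSubgaussianTail hL ⟨1, hf_bdd⟩ hlip) hw
    (abs_sub_integral_le hf_bdd) two_pos (hbdd i) (hcond i)
  have hY_indep : iIndepFun (fun i ω ↦ g (x i ω) * z i ω) ℙ :=
    hindep.comp (fun _ p ↦ g p.1 * p.2) fun _ ↦ by fun_prop
  have hexponent : -(n * (ε / 8) ^ 2) / (2 * (16 * (2 ^ 2 * (c * L ^ 2 / d))))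
      ≤ -(ε ^ 2 * n * d) / (10 ^ 4 * c * L ^ 2) := by
    rw [show -(n * (ε / 8) ^ 2) / (2 * (16 * (2 ^ 2 * (c * L ^ 2 / d)))) =
      -(ε ^ 2 * n * d) / (8192 * c * L ^ 2) by field_simp; ring, neg_div, neg_div, neg_le_neg_iff]
    gcongr
    norm_num
  calc _ ≤ _ := measure_mean_ge_le_of_iIndepFun hY_indep hY_subG hn (by positivity)
    _ ≤ _ := by
      rw [coe_toNNReal _ (by positivity)]
      gcongr
      exact (exp_le_exp.mpr hexponent).trans (le_mul_of_one_le_left (exp_nonneg _) one_le_two)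

/-- single-function correlation bound. For `xᵢ ∼ μ` `c`-isoperimetric,
`E[zᵢ|xᵢ] = 0`, `|zᵢ| ≤ 2`, and `f : ℝᵈ → [-1,1]` an `L`-Lipschitz function,
`P[(1/n) ∑ᵢ (f(xᵢ) - E_μ f) zᵢ ≥ ε/8] ≤ 2 exp(-ε²nd/(10⁴cL²))`. -/
theorem single_function_correlation_bound
    {Ω : Type*} [MeasureSpace Ω] [IsProbabilityMeasure (ℙ : Measure Ω)]
    (d n : ℕ) (hd : 0 < d) (hn : 0 < n) (c L ε : ℝ) (hc : 0 < c) (hL : 0 < L)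
    (hε : 0 < ε)
    (μ : Measure (EuclideanSpace ℝ (Fin d))) [IsProbabilityMeasure μ]
    (hiso : Isoperimetric d c μ)
    (x : Fin n → Ω → EuclideanSpace ℝ (Fin d)) (z : Fin n → Ω → ℝ)
    (hxmeas : ∀ i, Measurable (x i)) (hzmeas : ∀ i, Measurable (z i))
    (hlaw : ∀ i, Measure.map (x i) ℙ = μ)
    (hindep : iIndepFun (fun i ω => (x i ω, z i ω)) ℙ)
    (hident : ∀ i j, IdentDistrib (fun ω => (x i ω, z i ω)) (fun ω => (x j ω, z j ω)) ℙ ℙ)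
    (hcond : ∀ i, (ℙ : Measure Ω)[z i | MeasurableSpace.comap (x i) inferInstance]
      =ᵐ[(ℙ : Measure Ω)] (0 : Ω → ℝ))
    (hbdd : ∀ i, ∀ᵐ ω ∂(ℙ : Measure Ω), |z i ω| ≤ 2)
    (f : EuclideanSpace ℝ (Fin d) → ℝ)
    (hf1 : ∀ v, f v ∈ Set.Icc (-1 : ℝ) 1)
    (hlip : LipschitzWith (Real.toNNReal L) f) :
    (ℙ : Measure Ω) {ω | ε / 8 ≤ (1 / n : ℝ) * ∑ i, (f (x i ω) - ∫ y, f y ∂μ) * z i ω} ≤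
      ENNReal.ofReal (2 * Real.exp (-(ε ^ 2 * n * d) / (10 ^ 4 * c * L ^ 2))) :=
  single_function_correlation_bound_general d n hd hn c L ε hc hL hε μ hiso x z hxmeas hzmeas hlaw
    hindep hcond hbdd f hf1 hlip
end
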